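/- arXiv:1506.07587 — 3 statements merged into one kernel-verified Lean document; each statement's English description precedes it below -/
import Mathlib

section
/- If n is an element of a finitely generated reduced cancellative commutative monoid S with nonzero catenary degree, then c(n) is at least the minimum catenary degree among all Betti elements of S. In particular, the minimum nonzero catenary degree occurring in S is attained at a Betti element of S. -/
/-- The set of factorizations of `n` in terms of the generators `gens`. -/
def ZsetM {S : Type*} [AddCancelCommMonoid S] {k : ℕ} (gens : Fin k → S) (n : S) :
    Set (Fin k → ℕ) :=
  {a | ∑ i, a i • gens i = n}

/-- The length of a factorization. -/
def flen {k : ℕ} (a : Fin k → ℕ) : ℕ := ∑ i, a i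

/-- The distance between two factorizations:
`max (|a - gcd(a,b)|, |b - gcd(a,b)|)` (componentwise gcd = min). -/
def fdist {k : ℕ} (a b : Fin k → ℕ) : ℕ :=
  max (∑ i, (a i - b i)) (∑ i, (b i - a i))

/-- There is an `N`-chain of factorizations within `Z` from `a` to `b`. -/
def IsNChain {k : ℕ} (Z : Set (Fin k → ℕ)) (N : ℕ) (a b : Fin k → ℕ) : Prop :=
  ∃ l : List (Fin k → ℕ), l.head? = some a ∧ l.getLast? = some b ∧
    (∀ x ∈ l, x ∈ Z) ∧ l.Chain' (fun x y => fdist x y ≤ N)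

/-- The catenary degree of `n`: the least `N` such that any two factorizations
of `n` are connected by an `N`-chain. -/
noncomputable def catDegM {S : Type*} [AddCancelCommMonoid S] {k : ℕ}
    (gens : Fin k → S) (n : S) : ℕ :=
  sInf {N | ∀ a ∈ ZsetM gens n, ∀ b ∈ ZsetM gens n, IsNChain (ZsetM gens n) N a b}

/-- `n` is a Betti element: the graph on `Z(n)` joining factorizations with
nonzero componentwise gcd is disconnected. -/
def IsBettiM {S : Type*} [AddCancelCommMonoid S] {k : ℕ} (gens : Fin k → S)
    (n : S) : Prop :=
  ∃ a ∈ ZsetM gens n, ∃ b ∈ ZsetM gens n,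
    ¬ Relation.ReflTransGen
      (fun x y => x ∈ ZsetM gens n ∧ y ∈ ZsetM gens n ∧ ∃ i, min (x i) (y i) ≠ 0) a b

/-! Let `t` be the least `L` such that some element with at least two factorizations has all
its factorizations of length at most `L`. If `p` is a longest factorization of `n` and `q ≠ p`
another one, removing their common part `g = p ⊓ q` leaves two distinct factorizations of
another element; a longest factorization of that element has length at least `t`, so
`|p| ≥ t + |g|` and `d(p, q) ≥ |p| - |g| ≥ t`. Hence every chain leaving `p` has a step of
length at least `t`, and `c(n) ≥ t` as soon as `c(n) > 0`. At an element `b` where `t` is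
attained the same estimate forces distinct factorizations to have trivial gcd, so `b` is a
Betti element, and `c(b) = t` because any two factorizations of `b` are at distance `≤ t`. -/

section FactorizationArithmetic

variable {k : ℕ}

lemma flen_add (a b : Fin k → ℕ) : flen (a + b) = flen a + flen b := by
  simp only [flen, Pi.add_apply, Finset.sum_add_distrib]

lemma flen_eq_zero {a : Fin k → ℕ} : flen a = 0 ↔ a = 0 := by
  simp [flen, Finset.sum_eq_zero_iff, funext_iff]

lemma fdist_self (a : Fin k → ℕ) : fdist a a = 0 := by
  simp [fdist]

lemma fdist_le_max_flen (a b : Fin k → ℕ) : fdist a b ≤ max (flen a) (flen b) :=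
  max_le_max (Finset.sum_le_sum fun _ _ => Nat.sub_le _ _)
    (Finset.sum_le_sum fun _ _ => Nat.sub_le _ _)

lemma flen_le_fdist_add_flen_inf (a b : Fin k → ℕ) : flen a ≤ fdist a b + flen (a ⊓ b) :=
  calc flen a ≤ ∑ i, (a i - b i) + flen (a ⊓ b) := by
        rw [flen, flen, ← Finset.sum_add_distrib]
        exact Finset.sum_le_sum fun i _ => by simp only [Pi.inf_apply]; omega
    _ ≤ fdist a b + flen (a ⊓ b) := Nat.add_le_add_right (le_max_left _ _) _

end FactorizationArithmetic

section Chains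

variable {k : ℕ} {Z : Set (Fin k → ℕ)} {N : ℕ} {a b : Fin k → ℕ}

lemma IsNChain.pair (ha : a ∈ Z) (hb : b ∈ Z) (h : fdist a b ≤ N) : IsNChain Z N a b :=
  ⟨[a, b], rfl, rfl, by simp [ha, hb], List.isChain_pair.2 h⟩

lemma IsNChain.exists_step (h : IsNChain Z N a b) (hab : a ≠ b) :
    ∃ c ∈ Z, c ≠ a ∧ fdist a c ≤ N := by
  obtain ⟨l, hhead, hlast, hmem, hchain⟩ := h
  induction l generalizing a with
  | nil => simp at hhead
  | cons x l ih =>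
    obtain rfl : x = a := by simpa using hhead
    cases l with
    | nil => exact absurd (by simpa using hlast) hab
    | cons y l =>
      rw [List.Chain', List.isChain_cons_cons] at hchain
      by_cases hyx : y = x
      · subst hyx
        exact ih hab rfl (by simpa using hlast) (fun z hz => hmem z (List.mem_cons_of_mem _ hz))
          hchain.2
      · exact ⟨y, hmem y (by simp), hyx, hchain.1⟩

end Chains

section Factorizations

variable {S : Type*} [AddCancelCommMonoid S] {k : ℕ} {gens : Fin k → S}

lemma add_mem_ZsetM {a b : Fin k → ℕ} {m m' : S} (ha : a ∈ ZsetM gens m)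
    (hb : b ∈ ZsetM gens m') : a + b ∈ ZsetM gens (m + m') := by
  simp only [ZsetM, Set.mem_ofPred_eq, Pi.add_apply, add_smul, Finset.sum_add_distrib] at *
  rw [ha, hb]

lemma single_mem_ZsetM (i : Fin k) : Pi.single i 1 ∈ ZsetM gens (gens i) := by
  simp [ZsetM]

lemma add_mem_ZsetM_iff {z g : Fin k → ℕ} {n m : S} (hg : g ∈ ZsetM gens m) :
    z + g ∈ ZsetM gens (n + m) ↔ z ∈ ZsetM gens n := by
  simp only [ZsetM, Set.mem_ofPred_eq, Pi.add_apply, add_smul, Finset.sum_add_distrib] at *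
  rw [hg, add_left_inj]

lemma exists_forall_add_mem_ZsetM_iff {u g : Fin k → ℕ} {n : S} (h : u + g ∈ ZsetM gens n) :
    ∃ n' : S, ∀ z, z + g ∈ ZsetM gens n ↔ z ∈ ZsetM gens n' := by
  have hg : g ∈ ZsetM gens (∑ i, g i • gens i) := rfl
  have hn : n = ∑ i, u i • gens i + ∑ i, g i • gens i :=
    h.symm.trans (add_mem_ZsetM (gens := gens) rfl hg)
  exact ⟨_, fun z => hn ▸ add_mem_ZsetM_iff hg⟩

lemma ZsetM_zero_subset
    (hatom : ∀ i, ∀ a : Fin k → ℕ, ∑ j, a j • gens j = gens i → a = Pi.single i 1) :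
    ZsetM gens 0 ⊆ {0} := by
  intro a ha
  funext i
  have h := hatom i (a + Pi.single i 1)
    (Eq.trans (add_mem_ZsetM ha (single_mem_ZsetM i)) (zero_add _))
  simpa using congrFun h i

lemma ZsetM_isAntichain (h0 : ZsetM gens 0 ⊆ {0}) (n : S) :
    IsAntichain (· ≤ ·) (ZsetM gens n) := by
  intro a ha b hb hne hle
  have hb' : b - a + a ∈ ZsetM gens (0 + n) := by rwa [tsub_add_cancel_of_le hle, zero_add]
  have hdiff : b - a = 0 := h0 ((add_mem_ZsetM_iff ha).1 hb')
  exact hne (le_antisymm hle (tsub_eq_zero_iff_le.1 hdiff))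

lemma ZsetM_finite (h0 : ZsetM gens 0 ⊆ {0}) (n : S) : (ZsetM gens n).Finite :=
  (ZsetM_isAntichain h0 n).finite_of_partiallyWellOrderedOn (Set.isPWO_of_wellQuasiOrderedLE _)

variable (gens) in
def IsLongestFactorization (n : S) (p : Fin k → ℕ) : Prop :=
  p ∈ ZsetM gens n ∧ ∀ z ∈ ZsetM gens n, flen z ≤ flen p

lemma exists_isLongestFactorization (h0 : ZsetM gens 0 ⊆ {0}) {n : S}
    (hn : (ZsetM gens n).Nonempty) : ∃ p, IsLongestFactorization gens n p := by
  obtain ⟨p, hp, hmax⟩ := Set.exists_max_image _ flen (ZsetM_finite h0 n) hn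
  exact ⟨p, hp, hmax⟩

lemma IsLongestFactorization.flen_pos {n : S} {p : Fin k → ℕ}
    (hp : IsLongestFactorization gens n p) (hnt : (ZsetM gens n).Nontrivial) : 0 < flen p := by
  obtain ⟨q, hq, hqp⟩ := hnt.exists_ne p
  by_contra h
  have hp0 : p = 0 := flen_eq_zero.1 (by omega)
  have hq0 : q = 0 := flen_eq_zero.1 (by have := hp.2 q hq; omega)
  exact hqp (hq0.trans hp0.symm)

variable (gens) in
noncomputable def minMaxLength : ℕ :=
  sInf {L | ∃ (n : S) (p : Fin k → ℕ), IsLongestFactorization gens n p ∧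
    (ZsetM gens n).Nontrivial ∧ flen p = L}

lemma exists_minMaxLength_add_flen_inf_le (h0 : ZsetM gens 0 ⊆ {0}) {n : S} {x y : Fin k → ℕ}
    (hx : x ∈ ZsetM gens n) (hy : y ∈ ZsetM gens n) (hxy : x ≠ y) :
    ∃ z ∈ ZsetM gens n, minMaxLength gens + flen (x ⊓ y) ≤ flen z := by
  set g := x ⊓ y
  have hxg : x - g + g = x := tsub_add_cancel_of_le inf_le_left
  have hyg : y - g + g = y := tsub_add_cancel_of_le inf_le_right
  obtain ⟨n', hn'⟩ := exists_forall_add_mem_ZsetM_iff (hxg ▸ hx)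
  have hx' : x - g ∈ ZsetM gens n' := (hn' (x - g)).1 (by rwa [hxg])
  have hy' : y - g ∈ ZsetM gens n' := (hn' (y - g)).1 (by rwa [hyg])
  have hnt : (ZsetM gens n').Nontrivial :=
    ⟨_, hx', _, hy', fun h => hxy (by rw [← hxg, ← hyg, h])⟩
  obtain ⟨w, hw⟩ := exists_isLongestFactorization h0 hnt.nonempty
  have ht : minMaxLength gens ≤ flen w := Nat.sInf_le ⟨n', w, hw, hnt, rfl⟩
  exact ⟨w + g, (hn' w).2 hw.1, by rw [flen_add]; omega⟩

lemma minMaxLength_le_fdist (h0 : ZsetM gens 0 ⊆ {0}) {n : S} {p q : Fin k → ℕ}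
    (hp : IsLongestFactorization gens n p) (hq : q ∈ ZsetM gens n) (hqp : q ≠ p) :
    minMaxLength gens ≤ fdist p q := by
  obtain ⟨z, hz, hle⟩ := exists_minMaxLength_add_flen_inf_le h0 hp.1 hq hqp.symm
  have := hp.2 z hz
  have := flen_le_fdist_add_flen_inf p q
  omega

lemma minMaxLength_le_catDegM (h0 : ZsetM gens 0 ⊆ {0}) {n : S} {p : Fin k → ℕ}
    (hp : IsLongestFactorization gens n p) (hnt : (ZsetM gens n).Nontrivial)
    (hC : ∃ N, ∀ a ∈ ZsetM gens n, ∀ b ∈ ZsetM gens n, IsNChain (ZsetM gens n) N a b) :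
    minMaxLength gens ≤ catDegM gens n := by
  obtain ⟨q, hq, hqp⟩ := hnt.exists_ne p
  obtain ⟨c, hc, hcp, hdist⟩ := (Nat.sInf_mem hC p hp.1 q hq).exists_step hqp.symm
  exact (minMaxLength_le_fdist h0 hp hc hcp).trans hdist

lemma ZsetM_nontrivial_of_catDegM_pos {n : S} (hn : 0 < catDegM gens n) :
    (ZsetM gens n).Nontrivial := by
  by_contra h
  have hsub := Set.not_nontrivial_iff.1 h
  have h0 : ∀ a ∈ ZsetM gens n, ∀ b ∈ ZsetM gens n, IsNChain (ZsetM gens n) 0 a b :=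
    fun a ha b hb => hsub ha hb ▸ IsNChain.pair ha ha (fdist_self a).le
  exact hn.ne' (Nat.eq_zero_of_le_zero (Nat.sInf_le h0))

lemma minMaxLength_le_catDegM_of_pos (h0 : ZsetM gens 0 ⊆ {0}) {n : S}
    (hn : 0 < catDegM gens n) : minMaxLength gens ≤ catDegM gens n := by
  have hnt := ZsetM_nontrivial_of_catDegM_pos hn
  obtain ⟨p, hp⟩ := exists_isLongestFactorization h0 hnt.nonempty
  exact minMaxLength_le_catDegM h0 hp hnt (Nat.nonempty_of_pos_sInf hn)

lemma exists_isLongestFactorization_flen_eq_minMaxLength (h0 : ZsetM gens 0 ⊆ {0}) {n : S}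
    (hn : 0 < catDegM gens n) :
    ∃ (b : S) (p : Fin k → ℕ), IsLongestFactorization gens b p ∧
      (ZsetM gens b).Nontrivial ∧ flen p = minMaxLength gens := by
  have hnt := ZsetM_nontrivial_of_catDegM_pos hn
  obtain ⟨p, hp⟩ := exists_isLongestFactorization h0 hnt.nonempty
  exact (Nat.sInf_mem ⟨flen p, n, p, hp, hnt, rfl⟩ : minMaxLength gens ∈ _)

lemma catDegM_eq_minMaxLength (h0 : ZsetM gens 0 ⊆ {0}) {b : S} {p : Fin k → ℕ}
    (hp : IsLongestFactorization gens b p) (hnt : (ZsetM gens b).Nontrivial)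
    (ht : flen p = minMaxLength gens) : catDegM gens b = minMaxLength gens := by
  have hC : ∀ x ∈ ZsetM gens b, ∀ y ∈ ZsetM gens b,
      IsNChain (ZsetM gens b) (minMaxLength gens) x y := fun x hx y hy =>
    IsNChain.pair hx hy <| (fdist_le_max_flen x y).trans <|
      max_le ((hp.2 x hx).trans ht.le) ((hp.2 y hy).trans ht.le)
  exact le_antisymm (Nat.sInf_le hC) (minMaxLength_le_catDegM h0 hp hnt ⟨_, hC⟩)

lemma isBettiM_of_inf_eq_zero {m : S} (hnt : (ZsetM gens m).Nontrivial)
    (h : ∀ x ∈ ZsetM gens m, ∀ y ∈ ZsetM gens m, x ≠ y → x ⊓ y = 0) : IsBettiM gens m := by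
  obtain ⟨a, ha, b, hb, hab⟩ := hnt
  suffices ∀ c, Relation.ReflTransGen
      (fun x y => x ∈ ZsetM gens m ∧ y ∈ ZsetM gens m ∧ ∃ i, min (x i) (y i) ≠ 0) a c → a = c from
    ⟨a, ha, b, hb, fun hrel => hab (this b hrel)⟩
  intro c hrel
  induction hrel with
  | refl => rfl
  | tail _ hedge ih =>
    obtain ⟨hx, hy, i, hi⟩ := hedge
    subst ih
    by_contra hne
    exact hi (by simpa using congrFun (h _ hx _ hy hne) i)

lemma isBettiM_of_flen_eq_minMaxLength (h0 : ZsetM gens 0 ⊆ {0}) {b : S} {p : Fin k → ℕ}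
    (hp : IsLongestFactorization gens b p) (hnt : (ZsetM gens b).Nontrivial)
    (ht : flen p = minMaxLength gens) : IsBettiM gens b :=
  isBettiM_of_inf_eq_zero hnt fun x hx y hy hxy => by
    obtain ⟨z, hz, hle⟩ := exists_minMaxLength_add_flen_inf_le h0 hx hy hxy
    have := hp.2 z hz
    exact flen_eq_zero.1 (by omega)

end Factorizations

theorem min_nonzero_catDeg_at_betti_general {S : Type*} [AddCancelCommMonoid S] {k : ℕ}
    (gens : Fin k → S)
    (hatom : ∀ i, ∀ a : Fin k → ℕ, ∑ j, a j • gens j = gens i → a = Pi.single i 1)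
    (n : S) (hn : 0 < catDegM gens n) :
    sInf {c | ∃ m : S, IsBettiM gens m ∧ catDegM gens m = c} ≤ catDegM gens n ∧
    ∃ m : S, IsBettiM gens m ∧
      catDegM gens m = sInf {c | (∃ m' : S, catDegM gens m' = c) ∧ c ≠ 0} := by
  have h0 := ZsetM_zero_subset hatom
  obtain ⟨b, p, hp, hnt, ht⟩ := exists_isLongestFactorization_flen_eq_minMaxLength h0 hn
  have hcat := catDegM_eq_minMaxLength h0 hp hnt ht
  have hbetti := isBettiM_of_flen_eq_minMaxLength h0 hp hnt ht
  have hmin : sInf {c | (∃ m' : S, catDegM gens m' = c) ∧ c ≠ 0} = minMaxLength gens := by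
    refine le_antisymm (Nat.sInf_le ⟨⟨b, hcat⟩, ht ▸ (hp.flen_pos hnt).ne'⟩) ?_
    refine le_csInf ⟨_, ⟨n, rfl⟩, hn.ne'⟩ ?_
    rintro _ ⟨⟨m, rfl⟩, hm⟩
    exact minMaxLength_le_catDegM_of_pos h0 (Nat.pos_of_ne_zero hm)
  refine ⟨?_, b, hbetti, hcat.trans hmin.symm⟩
  calc sInf {c | ∃ m : S, IsBettiM gens m ∧ catDegM gens m = c}
      ≤ catDegM gens b := Nat.sInf_le ⟨b, hbetti, rfl⟩
    _ = minMaxLength gens := hcat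
    _ ≤ catDegM gens n := minMaxLength_le_catDegM_of_pos h0 hn

/-- If n has nonzero catenary degree, then c(n) is at least the minimum catenary
degree among all Betti elements; in particular the minimum nonzero catenary
degree occurring in S is attained at a Betti element. -/
theorem min_nonzero_catDeg_at_betti {S : Type*} [AddCancelCommMonoid S] {k : ℕ}
    (gens : Fin k → S)
    (hred : ∀ a b : S, a + b = 0 → a = 0)
    (hgen : ∀ s : S, ∃ a : Fin k → ℕ, ∑ i, a i • gens i = s)
    (hatom : ∀ i, ∀ a : Fin k → ℕ, ∑ j, a j • gens j = gens i → a = Pi.single i 1)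
    (n : S) (hn : 0 < catDegM gens n) :
    sInf {c | ∃ m : S, IsBettiM gens m ∧ catDegM gens m = c} ≤ catDegM gens n ∧
    ∃ m : S, IsBettiM gens m ∧
      catDegM gens m = sInf {c | (∃ m' : S, catDegM gens m' = c) ∧ c ≠ 0} :=
  min_nonzero_catDeg_at_betti_general gens hatom n hn
end

section
/- Fix k ≥ 3 and let S = ⟨2k+1, 6k-5, 6k-1⟩. The Betti elements of S are exactly u = (3k-1)(2k+1), v = (k+1)(6k-5), and w = 2(6k-1). -/
/-- The set of factorizations of `n` over the generators `gens`. -/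
def Zset {k : ℕ} (gens : Fin k → ℕ) (n : ℕ) : Set (Fin k → ℕ) :=
  {a | ∑ i, a i * gens i = n}

/-- The catenary degree of `n`: the least `N` such that any two factorizations
of `n` are connected by an `N`-chain. -/
noncomputable def catDeg {k : ℕ} (gens : Fin k → ℕ) (n : ℕ) : ℕ :=
  sInf {N | ∀ a ∈ Zset gens n, ∀ b ∈ Zset gens n, IsNChain (Zset gens n) N a b}

/-- `n` is a Betti element: the graph on `Z(n)` joining factorizations with
nonzero componentwise gcd is disconnected. -/
def IsBetti {k : ℕ} (gens : Fin k → ℕ) (n : ℕ) : Prop :=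
  ∃ a ∈ Zset gens n, ∃ b ∈ Zset gens n,
    ¬ Relation.ReflTransGen
      (fun x y => x ∈ Zset gens n ∧ y ∈ Zset gens n ∧ ∃ i, min (x i) (y i) ≠ 0) a b

/-- The set of catenary degrees of elements of the monoid generated by `gens`. -/
def CatSet {k : ℕ} (gens : Fin k → ℕ) : Set ℕ :=
  {c | ∃ n, (Zset gens n).Nonempty ∧ catDeg gens n = c}

/-!
For each generator `nᵢ` let `cᵢ` be the least positive multiple of `nᵢ` that factors over the
other two generators, say as `rᵢ`. Every factorization of `cᵢ nᵢ` that uses `nᵢ` is `cᵢ eᵢ`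
itself, so `cᵢ eᵢ` is isolated in the graph of `cᵢ nᵢ` and `cᵢ nᵢ` is a Betti element.
Conversely, two factorizations of `n` with disjoint supports in three coordinates force one of
them to be `a = aᵢ eᵢ`, with `aᵢ ≥ cᵢ` because the other one factors `aᵢ nᵢ` without `nᵢ`. Unless
`n = cᵢ nᵢ`, and provided `rᵢ` has full support off `i`, the factorization `(aᵢ - cᵢ) eᵢ + rᵢ`
is then adjacent to both.

With `k = s + 2` the generators are `2s+5, 6s+7, 6s+11`, and the minimal relations
`(3s+5)(2s+5) = (s+2)(6s+7) + (6s+11)`, `(s+3)(6s+7) = (3s+2)(2s+5) + (6s+11)` and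
`2(6s+11) = 3(2s+5) + (6s+7)` all have full support; their minimality is a congruence
computation modulo `2s+5`.
-/

open Relation

section Factorizations

variable {k : ℕ} {gens : Fin k → ℕ} {m n : ℕ} {x y : Fin k → ℕ} {i : Fin k}

def FactorizationAdj (gens : Fin k → ℕ) (n : ℕ) (x y : Fin k → ℕ) : Prop :=
  x ∈ Zset gens n ∧ y ∈ Zset gens n ∧ ∃ i, min (x i) (y i) ≠ 0

instance : Std.Symm (FactorizationAdj gens n) where
  symm _ _ := fun ⟨hx, hy, i, hi⟩ => ⟨hy, hx, i, by rwa [min_comm]⟩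

theorem mem_Zset : x ∈ Zset gens n ↔ ∑ i, x i * gens i = n :=
  Iff.rfl

theorem add_mem_Zset (hx : x ∈ Zset gens m) (hy : y ∈ Zset gens n) :
    x + y ∈ Zset gens (m + n) := by
  rw [mem_Zset] at *
  simp only [Pi.add_apply, add_mul, Finset.sum_add_distrib]
  exact congrArg₂ (· + ·) hx hy

theorem mem_Zset_of_forall_ne (hx : ∀ j ≠ i, x j = 0) : x ∈ Zset gens (x i * gens i) :=
  Finset.sum_eq_single i (fun j _ hj => by rw [hx j hj, zero_mul]) (by simp)

theorem single_mem_Zset (c : ℕ) : Pi.single i c ∈ Zset gens (c * gens i) := by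
  simpa using mem_Zset_of_forall_ne (gens := gens) (x := Pi.single i c) (i := i)
    fun j hj => by simp [hj]

theorem eq_zero_of_mem_Zset_zero (hgens : ∀ i, 0 < gens i) (hx : x ∈ Zset gens 0) : x = 0 := by
  funext j
  have := (Finset.sum_eq_zero_iff.mp hx) j (Finset.mem_univ j)
  simpa [(hgens j).ne'] using this

theorem update_zero_mem_Zset (hx : x ∈ Zset gens n) :
    ∃ m, Function.update x i 0 ∈ Zset gens m ∧ n = x i * gens i + m := by
  refine ⟨_, rfl, ?_⟩
  have hsplit : Pi.single i (x i) + Function.update x i 0 = x := by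
    funext j
    by_cases hj : j = i
    · subst hj; simp
    · simp [hj]
  have := add_mem_Zset (single_mem_Zset (gens := gens) (i := i) (x i))
    (rfl : Function.update x i 0 ∈ _)
  rw [hsplit] at this
  exact hx.symm.trans this

structure IsMinimalRelation (gens : Fin k → ℕ) (i : Fin k) (c : ℕ) (r : Fin k → ℕ) : Prop where
  pos : 0 < c
  mem : r ∈ Zset gens (c * gens i)
  apply_self : r i = 0
  le : ∀ c', 0 < c' → ∀ z ∈ Zset gens (c' * gens i), z i = 0 → c ≤ c'

variable {c : ℕ} {r : Fin k → ℕ}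

theorem IsMinimalRelation.eq_single (hgens : ∀ i, 0 < gens i) (hrel : IsMinimalRelation gens i c r)
    (hx : x ∈ Zset gens (c * gens i)) (hxi : x i ≠ 0) : x = Pi.single i c := by
  obtain ⟨m, hm, hsplit⟩ := update_zero_mem_Zset (i := i) hx
  have hle : x i ≤ c := Nat.le_of_mul_le_mul_right (by omega) (hgens i)
  have hm' : m = (c - x i) * gens i := by rw [Nat.sub_mul]; omega
  have hxc : x i = c := by
    by_contra hne
    have := hrel.le (c - x i) (by omega) _ (hm' ▸ hm) (by simp)
    omega
  have hupdate : Function.update x i 0 = 0 :=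
    eq_zero_of_mem_Zset_zero hgens (by rwa [hm', hxc, Nat.sub_self, zero_mul] at hm)
  funext j
  by_cases hj : j = i
  · subst hj; simp [hxc]
  · simpa [hj] using congrFun hupdate j

theorem IsMinimalRelation.isBetti (hgens : ∀ i, 0 < gens i) (hrel : IsMinimalRelation gens i c r) :
    IsBetti gens (c * gens i) := by
  refine ⟨Pi.single i c, single_mem_Zset c, r, hrel.mem, fun hreach => ?_⟩
  have hisolated : ∀ z, ReflTransGen (FactorizationAdj gens (c * gens i)) (Pi.single i c) z →
      z = Pi.single i c := by
    intro z hz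
    induction hz with
    | refl => rfl
    | tail _ hyz ih =>
      obtain ⟨-, hz, j, hj⟩ := ih ▸ hyz
      obtain rfl : j = i := by
        by_contra hne
        simp [Pi.single_eq_of_ne hne] at hj
      exact hrel.eq_single hgens hz (by omega)
  have := congrFun (hisolated r hreach) i
  simp [hrel.apply_self, hrel.pos.ne] at this

theorem IsMinimalRelation.reflTransGen (hgens : ∀ i, 0 < gens i)
    (hrel : IsMinimalRelation gens i c r) (hr : ∀ j ≠ i, r j ≠ 0) (hn : n ≠ c * gens i)
    {a b : Fin k → ℕ} (ha : a ∈ Zset gens n) (hai : ∀ j ≠ i, a j = 0) (hb : b ∈ Zset gens n) :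
    ReflTransGen (FactorizationAdj gens n) a b := by
  have hn' : a i * gens i = n := (mem_Zset_of_forall_ne hai).symm.trans ha
  rcases Nat.eq_zero_or_pos (a i) with ha0 | ha0
  · obtain rfl : n = 0 := by rw [← hn', ha0, zero_mul]
    rw [eq_zero_of_mem_Zset_zero hgens ha, eq_zero_of_mem_Zset_zero hgens hb]
  obtain hbi | hbi := ne_or_eq (b i) 0
  · exact .single ⟨ha, hb, i, by omega⟩
  have hca : c < a i := lt_of_le_of_ne (hrel.le (a i) ha0 b (hn' ▸ hb) hbi)
    fun h => hn (h ▸ hn'.symm)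
  obtain ⟨j, hj⟩ : ∃ j, b j ≠ 0 := by
    by_contra! hb0
    have : n = 0 := hb.symm.trans (by simp [hb0])
    exact (Nat.mul_pos ha0 (hgens i)).ne' (hn'.trans this)
  have hji : j ≠ i := by rintro rfl; exact hj hbi
  have hz : Pi.single i (a i - c) + r ∈ Zset gens n := by
    have := add_mem_Zset (single_mem_Zset (gens := gens) (i := i) (a i - c)) hrel.mem
    rwa [← Nat.add_mul, Nat.sub_add_cancel hca.le, hn'] at this
  refine .tail (.single ⟨ha, hz, i, ?_⟩) ⟨hz, hb, j, ?_⟩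
  · simp only [Pi.add_apply, Pi.single_eq_same, hrel.apply_self, add_zero]
    omega
  · simp [Pi.single_eq_of_ne hji, hr j hji, hj]

end Factorizations

theorem exists_forall_ne_eq_zero_of_min_eq_zero {x y : Fin 3 → ℕ} (h : ∀ j, min (x j) (y j) = 0) :
    (∃ i, ∀ j ≠ i, x j = 0) ∨ (∃ i, ∀ j ≠ i, y j = 0) := by
  simp only [Nat.min_eq_zero_iff] at h
  rcases h 0 with h0 | h0 <;> rcases h 1 with h1 | h1 <;> rcases h 2 with h2 | h2 <;>
    simp [Fin.exists_fin_succ, Fin.forall_fin_succ, *]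

theorem isBetti_iff_exists_eq_mul {gens : Fin 3 → ℕ} (hgens : ∀ i, 0 < gens i) {c : Fin 3 → ℕ}
    {r : Fin 3 → Fin 3 → ℕ} (hrel : ∀ i, IsMinimalRelation gens i (c i) (r i))
    (hr : ∀ i, ∀ j ≠ i, r i j ≠ 0) {n : ℕ} :
    IsBetti gens n ↔ ∃ i, n = c i * gens i := by
  refine ⟨fun ⟨a, ha, b, hb, hab⟩ => ?_, fun ⟨i, hi⟩ => hi ▸ (hrel i).isBetti hgens⟩
  by_contra! hn
  refine hab ?_
  by_cases hshare : ∃ j, min (a j) (b j) ≠ 0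
  · exact .single ⟨ha, hb, hshare⟩
  rcases exists_forall_ne_eq_zero_of_min_eq_zero
      (fun j => not_not.mp fun hj => hshare ⟨j, hj⟩) with ⟨i, hai⟩ | ⟨i, hbi⟩
  · exact (hrel i).reflTransGen hgens (hr i) (hn i) ha hai hb
  · exact symm_of _ ((hrel i).reflTransGen hgens (hr i) (hn i) hb hbi ha)

theorem mem_Zset_three {a b c n : ℕ} {x : Fin 3 → ℕ} :
    x ∈ Zset ![a, b, c] n ↔ x 0 * a + x 1 * b + x 2 * c = n := by
  simp [mem_Zset, Fin.sum_univ_three]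

theorem Nat.dvd_of_dvd_four_mul {p a : ℕ} (hp : Odd p) (h : p ∣ 4 * a) : p ∣ a :=
  (Nat.Coprime.pow_right 2 (Nat.coprime_two_right.mpr hp)).dvd_of_dvd_mul_left h

section Family

variable (s : ℕ)

/-- Modulo `p = 2s+5` the generators are `1, -8, -4`; so `p ∣ 2z₁ + z₂`, and writing
`2z₁ + z₂ = mp` gives `2c = m(6s+7) + 3z₂`. -/
theorem isMinimalRelation_zero :
    IsMinimalRelation ![2*s+5, 6*s+7, 6*s+11] 0 (3*s+5) ![0, s+2, 1] := by
  refine ⟨by omega, mem_Zset_three.mpr (by simp only [Matrix.cons_val]; ring), rfl,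
    fun c hc z hz hz0 => ?_⟩
  have h : z 1 * (6*s+7) + z 2 * (6*s+11) = c * (2*s+5) := by simpa [mem_Zset_three, hz0] using hz
  obtain ⟨m, hm⟩ : 2*s+5 ∣ 2 * z 1 + z 2 := by
    refine Nat.dvd_of_dvd_four_mul ⟨s+2, by ring⟩ ((Nat.dvd_add_left (dvd_mul_left _ c)).mp ?_)
    exact ⟨3 * (z 1 + z 2), by rw [← h]; ring⟩
  have hc2 : 2*c = m*(6*s+7) + 3 * z 2 := by
    refine Nat.eq_of_mul_eq_mul_left (show 0 < 2*s+5 by omega) ?_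
    calc (2*s+5) * (2*c) = 2 * (z 1 * (6*s+7) + z 2 * (6*s+11)) := by rw [h]; ring
      _ = (2 * z 1 + z 2) * (6*s+7) + 3 * (2*s+5) * z 2 := by ring
      _ = (2*s+5) * (m*(6*s+7) + 3 * z 2) := by rw [hm]; ring
  rcases m with _ | _ | m
  · omega
  · omega
  · nlinarith

/-- If `c ≤ s + 2`, write `c = z₂ + d`; modulo `p = 2s+5` the relation becomes
`p ∣ 4(z₂ + 2d)`, so `p ∣ z₂ + 2d`, although `0 < z₂ + 2d ≤ 2c < p`. -/
theorem isMinimalRelation_one :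
    IsMinimalRelation ![2*s+5, 6*s+7, 6*s+11] 1 (s+3) ![3*s+2, 0, 1] := by
  refine ⟨by omega, mem_Zset_three.mpr (by simp only [Matrix.cons_val]; ring), rfl,
    fun c hc z hz hz1 => ?_⟩
  have h : z 0 * (2*s+5) + z 2 * (6*s+11) = c * (6*s+7) := by simpa [mem_Zset_three, hz1] using hz
  by_contra! hcs
  obtain ⟨d, rfl⟩ : ∃ d, c = z 2 + d := Nat.exists_eq_add_of_le (by nlinarith)
  have hdvd : 2*s+5 ∣ z 2 + 2*d := by
    refine Nat.dvd_of_dvd_four_mul ⟨s+2, by ring⟩ ((Nat.dvd_add_left (dvd_mul_left _ (z 0))).mp ?_)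
    exact ⟨3*d, by linarith⟩
  have := Nat.eq_zero_of_dvd_of_lt hdvd (by omega)
  omega

theorem isMinimalRelation_two :
    IsMinimalRelation ![2*s+5, 6*s+7, 6*s+11] 2 2 ![3, 1, 0] := by
  refine ⟨by omega, mem_Zset_three.mpr (by simp only [Matrix.cons_val]; ring), rfl,
    fun c hc z hz hz2 => ?_⟩
  have h : z 0 * (2*s+5) + z 1 * (6*s+7) = c * (6*s+11) := by simpa [mem_Zset_three, hz2] using hz
  by_contra! hc1
  obtain rfl : c = 1 := by omega
  have h1 : z 1 ≤ 1 := by nlinarith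
  have h0 : z 0 ≤ 3 := by nlinarith
  generalize z 0 = x₀, z 1 = x₁ at h h0 h1
  interval_cases x₁ <;> interval_cases x₀ <;> omega

theorem isBetti_family_iff (n : ℕ) :
    IsBetti ![2*s+5, 6*s+7, 6*s+11] n ↔
      n = (3*s+5) * (2*s+5) ∨ n = (s+3) * (6*s+7) ∨ n = 2 * (6*s+11) := by
  have hpos : ∀ i, 0 < (![2*s+5, 6*s+7, 6*s+11] : Fin 3 → ℕ) i := by
    intro i; fin_cases i <;> simp
  have hrel : ∀ i, IsMinimalRelation ![2*s+5, 6*s+7, 6*s+11] i (![3*s+5, s+3, 2] i)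
      (![![0, s+2, 1], ![3*s+2, 0, 1], ![3, 1, 0]] i) := by
    intro i
    fin_cases i
    exacts [isMinimalRelation_zero s, isMinimalRelation_one s, isMinimalRelation_two s]
  have hr : ∀ i, ∀ j ≠ i,
      (![![0, s+2, 1], ![3*s+2, 0, 1], ![3, 1, 0]] : Fin 3 → Fin 3 → ℕ) i j ≠ 0 := by
    intro i j hji
    fin_cases i <;> fin_cases j <;> simp_all
  rw [isBetti_iff_exists_eq_mul hpos hrel hr]
  simp [Fin.exists_fin_succ]

end Family

/-- For k ≥ 3, the Betti elements of S = ⟨2k+1, 6k-5, 6k-1⟩ are exactly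
u = (3k-1)(2k+1), v = (k+1)(6k-5), and w = 2(6k-1). -/
theorem betti_family (k : ℕ) (hk : 3 ≤ k) :
    {m | IsBetti ![2 * k + 1, 6 * k - 5, 6 * k - 1] m} =
      {(3 * k - 1) * (2 * k + 1), (k + 1) * (6 * k - 5), 2 * (6 * k - 1)} := by
  obtain ⟨s, rfl⟩ : ∃ s, k = s + 2 := ⟨k - 2, by omega⟩
  have h₁ : 2 * (s+2) + 1 = 2*s+5 := by omega
  have h₂ : 6 * (s+2) - 5 = 6*s+7 := by omega
  have h₃ : 6 * (s+2) - 1 = 6*s+11 := by omega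
  have h₄ : 3 * (s+2) - 1 = 3*s+5 := by omega
  ext n
  simp only [h₁, h₂, h₃, h₄, Set.mem_ofPred_eq, isBetti_family_iff, Set.mem_insert_iff,
    Set.mem_singleton_iff]
end

section
/- Let S = ⟨n_1, n_2⟩ ⊂ ℕ be a numerical monoid minimally generated by two coprime integers 1 < n_1 < n_2. Then the set of catenary degrees of S is C(S) = {0, n_2}. -/
open Relation

section Chains

variable {k : ℕ}

lemma fdist_comm (a b : Fin k → ℕ) : fdist a b = fdist b a :=
  max_comm _ _

def IsNStep (Z : Set (Fin k → ℕ)) (N : ℕ) (x y : Fin k → ℕ) : Prop :=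
  x ∈ Z ∧ y ∈ Z ∧ fdist x y ≤ N

instance (Z : Set (Fin k → ℕ)) (N : ℕ) : Std.Symm (IsNStep Z N) where
  symm _ _ := fun ⟨hx, hy, hd⟩ => ⟨hy, hx, fdist_comm _ _ ▸ hd⟩

lemma isNChain_iff_reflTransGen {Z : Set (Fin k → ℕ)} {N : ℕ} {a b : Fin k → ℕ} (ha : a ∈ Z) :
    IsNChain Z N a b ↔ ReflTransGen (IsNStep Z N) a b := by
  constructor
  · rintro ⟨_ | ⟨a', l⟩, hhead, hlast, hmem, hchain⟩
    · simp at hhead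
    obtain rfl : a' = a := by simpa using hhead
    exact List.relationReflTransGen_of_exists_isChain_cons l
      (hchain.imp_of_mem_imp fun x y hx hy hxy => ⟨hmem x hx, hmem y hy, hxy⟩)
      ((List.getLast_eq_iff_getLast?_eq_some _).mpr hlast)
  · intro h
    obtain ⟨l, hchain, hlast⟩ := List.exists_isChain_cons_of_relationReflTransGen h
    have hmem : ∀ x ∈ a :: l, x ∈ Z := by
      rintro x (_ | ⟨_, hx⟩)
      exacts [ha, hchain.cons_induction (· ∈ Z) l (fun _ _ hxy _ => hxy.2.1) ha x hx]
    exact ⟨a :: l, rfl, (List.getLast_eq_iff_getLast?_eq_some _).mp hlast, hmem,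
      hchain.imp fun _ _ hxy => hxy.2.2⟩

lemma catDeg_eq_zero_of_subsingleton {gens : Fin k → ℕ} {n : ℕ}
    (h : (Zset gens n).Subsingleton) : catDeg gens n = 0 :=
  Nat.sInf_eq_zero.mpr <| Or.inl fun _ ha _ hb =>
    (isNChain_iff_reflTransGen ha).mpr (h ha hb ▸ ReflTransGen.refl)

lemma Zset_zero {gens : Fin k → ℕ} (hgens : ∀ i, 0 < gens i) : Zset gens 0 = {0} := by
  ext a
  simp [Zset, Finset.sum_eq_zero_iff, funext_iff, (hgens _).ne']

end Chains

section TwoGenerators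

variable {n₁ n₂ n : ℕ}

lemma mem_Zset_two {a : Fin 2 → ℕ} : a ∈ Zset ![n₁, n₂] n ↔ a 0 * n₁ + a 1 * n₂ = n := by
  simp [Zset, Fin.sum_univ_two]

lemma fdist_two (a b : Fin 2 → ℕ) :
    fdist a b = max (a 0 - b 0 + (a 1 - b 1)) (b 0 - a 0 + (b 1 - a 1)) := by
  simp [fdist, Fin.sum_univ_two]

lemma exists_shift_of_mem_Zset_two (h₁ : 0 < n₁) (hcop : Nat.Coprime n₁ n₂)
    {a b : Fin 2 → ℕ} (ha : a ∈ Zset ![n₁, n₂] n) (hb : b ∈ Zset ![n₁, n₂] n)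
    (hle : b 1 ≤ a 1) : ∃ m, a 1 = b 1 + m * n₁ ∧ b 0 = a 0 + m * n₂ := by
  rw [mem_Zset_two] at ha hb
  have h0 : a 0 ≤ b 0 := by
    by_contra! hlt
    have := Nat.mul_lt_mul_of_pos_right hlt h₁
    have := Nat.mul_le_mul_right n₂ hle
    omega
  have htrade : (a 1 - b 1) * n₂ = (b 0 - a 0) * n₁ := by
    rw [Nat.sub_mul, Nat.sub_mul]; omega
  obtain ⟨m, hm⟩ : n₁ ∣ a 1 - b 1 :=
    hcop.dvd_of_dvd_mul_right ⟨b 0 - a 0, by rw [htrade, mul_comm]⟩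
  have hm' : b 0 - a 0 = m * n₂ :=
    Nat.eq_of_mul_eq_mul_right h₁ (by rw [← htrade, hm]; ring)
  exact ⟨m, by rw [mul_comm] at hm; omega, by omega⟩

lemma fdist_eq_of_shift {a b : Fin 2 → ℕ} {m : ℕ} (h1 : a 1 = b 1 + m * n₁)
    (h0 : b 0 = a 0 + m * n₂) : fdist a b = max (m * n₁) (m * n₂) := by
  rw [fdist_two]; omega

lemma le_fdist_of_mem_Zset_two (h₁ : 0 < n₁) (hcop : Nat.Coprime n₁ n₂)
    {a b : Fin 2 → ℕ} (ha : a ∈ Zset ![n₁, n₂] n) (hb : b ∈ Zset ![n₁, n₂] n) (hne : a ≠ b) :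
    n₂ ≤ fdist a b := by
  wlog hle : b 1 ≤ a 1 generalizing a b
  · rw [fdist_comm]; exact this hb ha hne.symm (by omega)
  obtain ⟨m, h1, h0⟩ := exists_shift_of_mem_Zset_two h₁ hcop ha hb hle
  have hm : m ≠ 0 := by
    rintro rfl
    exact hne (by ext i; fin_cases i <;> simp_all)
  rw [fdist_eq_of_shift h1 h0]
  exact le_max_of_le_right (Nat.le_mul_of_pos_left n₂ (Nat.pos_of_ne_zero hm))

lemma reflTransGen_isNStep_of_shift (h₁₂ : n₁ ≤ n₂) {a b : Fin 2 → ℕ} (m : ℕ)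
    (ha : a ∈ Zset ![n₁, n₂] n) (h1 : a 1 = b 1 + m * n₁) (h0 : b 0 = a 0 + m * n₂) :
    ReflTransGen (IsNStep (Zset ![n₁, n₂] n) n₂) a b := by
  induction m generalizing a with
  | zero =>
    obtain rfl : a = b := by ext i; fin_cases i <;> simp_all
    exact ReflTransGen.refl
  | succ m ih =>
    rw [add_one_mul] at h1 h0
    let a' : Fin 2 → ℕ := ![a 0 + n₂, a 1 - n₁]
    have ha' : a' ∈ Zset ![n₁, n₂] n := by
      have : n₁ * n₂ ≤ a 1 * n₂ := Nat.mul_le_mul_right n₂ (by omega)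
      rw [mem_Zset_two] at ha
      simp only [mem_Zset_two, a', Matrix.cons_val_zero, Matrix.cons_val_one, Nat.sub_mul,
        add_mul, mul_comm n₂ n₁]
      omega
    have hstep : fdist a a' ≤ n₂ := by
      simp only [fdist_two, a', Matrix.cons_val_zero, Matrix.cons_val_one]
      omega
    refine ReflTransGen.head ⟨ha, ha', hstep⟩ (ih ha' ?_ ?_) <;>
      simp only [a', Matrix.cons_val_zero, Matrix.cons_val_one] <;> omega

lemma reflTransGen_isNStep_two (h₁ : 0 < n₁) (h₁₂ : n₁ ≤ n₂) (hcop : Nat.Coprime n₁ n₂)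
    {a b : Fin 2 → ℕ} (ha : a ∈ Zset ![n₁, n₂] n) (hb : b ∈ Zset ![n₁, n₂] n) :
    ReflTransGen (IsNStep (Zset ![n₁, n₂] n) n₂) a b := by
  wlog hle : b 1 ≤ a 1 generalizing a b
  · exact symm (this hb ha (by omega))
  obtain ⟨m, h1, h0⟩ := exists_shift_of_mem_Zset_two h₁ hcop ha hb hle
  exact reflTransGen_isNStep_of_shift h₁₂ m ha h1 h0

lemma catDeg_two_of_nontrivial (h₁ : 0 < n₁) (h₁₂ : n₁ ≤ n₂) (hcop : Nat.Coprime n₁ n₂)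
    (hZ : (Zset ![n₁, n₂] n).Nontrivial) : catDeg ![n₁, n₂] n = n₂ := by
  refine IsLeast.csInf_eq ⟨fun a ha b hb => (isNChain_iff_reflTransGen ha).mpr
    (reflTransGen_isNStep_two h₁ h₁₂ hcop ha hb), fun N hN => ?_⟩
  obtain ⟨a, ha, b, hb, hne⟩ := hZ
  by_contra! hN₂
  have hsteps_trivial : IsNStep (Zset ![n₁, n₂] n) N ≤ Eq := fun x y ⟨hx, hy, hxy⟩ => by
    by_contra hxy_ne
    exact (le_fdist_of_mem_Zset_two h₁ hcop hx hy hxy_ne).not_gt (hxy.trans_lt hN₂)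
  exact hne <| reflTransGen_le_of_le hsteps_trivial a b <|
    (isNChain_iff_reflTransGen ha).mp (hN a ha b hb)

end TwoGenerators

/-- For a numerical monoid S = ⟨n₁, n₂⟩ minimally generated by coprime
1 < n₁ < n₂, the set of catenary degrees is C(S) = {0, n₂}. -/
theorem catSet_two_generated (n₁ n₂ : ℕ) (h₁ : 1 < n₁) (h₁₂ : n₁ < n₂)
    (hcop : Nat.Coprime n₁ n₂) :
    CatSet ![n₁, n₂] = {0, n₂} := by
  have hpos : ∀ i, 0 < ![n₁, n₂] i := fun i => by fin_cases i <;> simp <;> omega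
  ext c
  constructor
  · rintro ⟨n, -, rfl⟩
    rcases (Zset ![n₁, n₂] n).subsingleton_or_nontrivial with hZ | hZ
    · exact .inl (catDeg_eq_zero_of_subsingleton hZ)
    · exact .inr (catDeg_two_of_nontrivial (by omega) h₁₂.le hcop hZ)
  · rintro (rfl | hc)
    · exact ⟨0, by simp [Zset_zero hpos, catDeg_eq_zero_of_subsingleton]⟩
    rw [hc]
    have hn₂ : ![n₂, 0] ∈ Zset ![n₁, n₂] (n₁ * n₂) := mem_Zset_two.mpr (by simp [mul_comm])
    have hn₁ : ![0, n₁] ∈ Zset ![n₁, n₂] (n₁ * n₂) := mem_Zset_two.mpr (by simp)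
    have hne : (![n₂, 0] : Fin 2 → ℕ) ≠ ![0, n₁] := by
      simp only [ne_eq, funext_iff, Fin.forall_fin_two, Matrix.cons_val_zero,
        Matrix.cons_val_one, not_and]
      omega
    exact ⟨n₁ * n₂, ⟨_, hn₂⟩,
      catDeg_two_of_nontrivial (by omega) h₁₂.le hcop ⟨_, hn₂, _, hn₁, hne⟩⟩
end
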